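/- Let t ≥ 1 satisfy [S]ᵗ(1_{T^{≤t}}·w_t) > 0, let h : Ω → [0,∞] be measurable with supp(h) ⊆ T and h ≤ M for some M ∈ [0,∞], and let f := lift(h). Then α_t := [S]ᵗw_t / [S]ᵗ(1_{T^{≤t}}·w_t) satisfies α_t = φ_t(T)⁻¹ = (∫_Ω 1_T dφ_t)⁻¹, and the trace semantics satisfies ∫_Ω h dφ_t ≤ ⟦S⟧f ≤ (∫_Ω h dφ_t)·α_t + M·(α_t − 1). -/

import Mathlib

open MeasureTheory ProbabilityTheory Filter Set
open scoped ENNReal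

namespace PaperPPG

variable {Ω : Type*} [MeasurableSpace Ω]

/-- Concatenation of a finite word with an infinite sequence. -/
def cat {j : ℕ} (u : Fin j → Ω) (ω : ℕ → Ω) : ℕ → Ω :=
  fun n => if h : n < j then u ⟨n, h⟩ else ω (n - j)

/-- Extension of a finite word by the constant `star`. -/
def extendW (star : Ω) {j : ℕ} (u : Fin j → Ω) : ℕ → Ω :=
  fun n => if h : n < j then u ⟨n, h⟩ else star

/-- First `t` letters of an infinite sequence. -/
def take (t : ℕ) (ω : ℕ → Ω) : Fin t → Ω := fun i => ω i

/-- Cylinder generated by a set of words of length `j`. -/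
def cyl {j : ℕ} (B : Set (Fin j → Ω)) : Set (ℕ → Ω) := {ω | take j ω ∈ B}

/-- `u` is a prefix of `v`. -/
def IsPref {i j : ℕ} (u : Fin i → Ω) (v : Fin j → Ω) : Prop :=
  ∃ h : i ≤ j, ∀ k : Fin i, u k = v (Fin.castLE h k)

/-- A sequence of languages, `L j ⊆ Ω^j`, is prefix-free. -/
def PrefixFree (L : (j : ℕ) → Set (Fin j → Ω)) : Prop :=
  ∀ i j : ℕ, i ≠ j → ∀ u ∈ L i, ∀ v ∈ L j, ¬ IsPref u v

/-- `L^{≤ t+1}`: words of length `t+1` having a prefix in some `L j` (necessarily `j ≤ t+1`). -/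
def Lle (L : (j : ℕ) → Set (Fin j → Ω)) (t : ℕ) : Set (Fin (t + 1) → Ω) :=
  {v | ∃ j : ℕ, ∃ u ∈ L j, IsPref u v}

/-- `L^{> t+1}`: words of length `t+1` that are prefixes of members of some `L j` with `j > t+1`. -/
def Lgt (L : (j : ℕ) → Set (Fin j → Ω)) (t : ℕ) : Set (Fin (t + 1) → Ω) :=
  {u | ∃ j : ℕ, t + 1 < j ∧ ∃ v ∈ L j, IsPref u v}

/-- `T_{n+1}`: words of length `n+1` whose letters are outside `T` except the last one, in `T`. -/
def Tword (T : Set Ω) (n : ℕ) : Set (Fin (n + 1) → Ω) :=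
  {u | (∀ i : Fin (n + 1), (i : ℕ) < n → u i ∉ T) ∧ u (Fin.last n) ∈ T}

/-- `T^{≤ t+1}`: words of length `t+1` with some letter in `T`. -/
def Tle (T : Set Ω) (t : ℕ) : Set (Fin (t + 1) → Ω) := {u | ∃ i, u i ∈ T}

/-- Infinite sequences that terminate (enter `T`) in finite time. -/
def Tf (T : Set Ω) : Set (ℕ → Ω) := {ω | ∃ j, ω j ∈ T}

/-- T-respectfulness of a sequence of languages. -/
def TRespectful (T : Set Ω) (L : (j : ℕ) → Set (Fin j → Ω)) : Prop :=
  ∀ n : ℕ, Lgt L n ∩ Tword T n = ∅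

/-- Truncated weight of a word of length `t+1`. -/
noncomputable def wt (sc : Ω → ℝ≥0∞) (t : ℕ) (u : Fin (t + 1) → Ω) : ℝ≥0∞ :=
  ∏ i, sc (u i)

/-- Weight of an infinite sequence: the limit (infimum) of the nonincreasing
sequence of partial products of the scores. -/
noncomputable def w (sc : Ω → ℝ≥0∞) (ω : ℕ → Ω) : ℝ≥0∞ :=
  ⨅ t : ℕ, ∏ i : Fin (t + 1), sc (ω i)

/-- Finite approximation `f_t` of a function on infinite sequences. -/
noncomputable def ft (star : Ω) (t : ℕ) (f : (ℕ → Ω) → ℝ≥0∞) (u : Fin (t + 1) → Ω) : ℝ≥0∞ :=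
  f (extendW star u)

/-- A prefix-closed function with branches `L`. -/
structure IsPrefixClosed (T : Set Ω) (f : (ℕ → Ω) → ℝ≥0∞)
    (L : (j : ℕ) → Set (Fin j → Ω)) : Prop where
  measF : Measurable f
  measL : ∀ j, MeasurableSet (L j)
  pf : PrefixFree L
  supp : Function.support f = ⋃ j, cyl (L j)
  const : ∀ j : ℕ, ∀ u ∈ L j, ∀ ω ω' : ℕ → Ω, f (cat u ω) = f (cat u ω')
  resp : TRespectful T L

/-- Sequences that, from the first moment (if any) they enter `T`, remain in `T` forever. -/
def Theta (T : Set Ω) : Set (ℕ → Ω) :=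
  {ω | ∀ n, ω n ∉ T} ∪ ⋃ j : ℕ, {ω | (∀ n, n < j → ω n ∉ T) ∧ ∀ n, j ≤ n → ω n ∈ T}

/-- Finite version of `Theta`, on words of length `n+1`. -/
def ThetaW (T : Set Ω) (n : ℕ) : Set (Fin (n + 1) → Ω) :=
  {u | ∀ i, u i ∉ T} ∪
    ⋃ j : ℕ, {u | j ≤ n ∧ (∀ i : Fin (n + 1), (i : ℕ) < j → u i ∉ T) ∧
      ∀ i : Fin (n + 1), j ≤ (i : ℕ) → u i ∈ T}

/-- The lifting of `h : Ω → ℝ≥0∞` (supported on `T`) to infinite sequences. -/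
noncomputable def lift (T : Set Ω) (h : Ω → ℝ≥0∞) (ω : ℕ → Ω) : ℝ≥0∞ :=
  ∑' n : ℕ, (cyl (Tword T n)).indicator 1 ω * h (ω n)

/-- The branches of the lifting of `h`: `L 0 = ∅` and `L j = (Ω∖T)^{j-1}·(T ∩ supp h)`. -/
def liftBranch (T : Set Ω) (h : Ω → ℝ≥0∞) : (j : ℕ) → Set (Fin j → Ω)
  | 0 => ∅
  | n + 1 => {u | (∀ i : Fin (n + 1), (i : ℕ) < n → u i ∉ T) ∧
      u (Fin.last n) ∈ T ∩ Function.support h}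

/-- The filtering distribution at time `t+1` induced by a measure on words of
length `t+1` and the weight `wt sc t` as global potential. -/
noncomputable def filt (sc : Ω → ℝ≥0∞) (t : ℕ) (μ : Measure (Fin (t + 1) → Ω)) : Measure Ω :=
  (∫⁻ u, wt sc t u ∂μ)⁻¹ • Measure.map (fun u => u (Fin.last t)) (μ.withDensity (wt sc t))

/-- The data of a Markov chain: an initial law `μ1`, a Markov transition kernel `κ`,
the laws `μF n` of the first `n+1` states, and the law `μI` on infinite
trajectories, uniquely determined by the Ionescu-Tulcea theorem through the
cylinder condition `proj`. -/
structure MarkovSetting (Ω : Type*) [MeasurableSpace Ω] where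
  μ1 : Measure Ω
  prob1 : IsProbabilityMeasure μ1
  κ : Kernel Ω Ω
  markov : IsMarkovKernel κ
  μF : (n : ℕ) → Measure (Fin (n + 1) → Ω)
  μI : Measure (ℕ → Ω)
  probI : IsProbabilityMeasure μI
  base : μF 0 = Measure.map (fun x => fun _ : Fin 1 => x) μ1
  step : ∀ n : ℕ, μF (n + 1) =
    Measure.map (fun p : (Fin (n + 1) → Ω) × Ω => Fin.snoc p.1 p.2)
      ((μF n) ⊗ₘ (κ.comap (fun v => v (Fin.last n)) (measurable_pi_apply _)))
  proj : ∀ n : ℕ, Measure.map (take (n + 1)) μI = μF n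

-- measurability
lemma measurable_take (t : ℕ) : Measurable (take t : (ℕ → Ω) → Fin t → Ω) :=
  measurable_pi_lambda _ fun i => measurable_pi_apply _

lemma measurable_wt {sc : Ω → ℝ≥0∞} (hsc : Measurable sc) (t : ℕ) : Measurable (wt sc t) :=
  Finset.measurable_prod _ fun i _ => hsc.comp (measurable_pi_apply i)

lemma measurableSet_Tle {T : Set Ω} (hT : MeasurableSet T) (t : ℕ) :
    MeasurableSet (Tle T t) := by
  have : Tle T t = ⋃ i : Fin (t + 1), (fun u : Fin (t+1) → Ω => u i) ⁻¹' T := by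
    ext u; simp [Tle]
  rw [this]; exact MeasurableSet.iUnion fun i => (measurable_pi_apply i) hT

lemma measurableSet_Tword {T : Set Ω} (hT : MeasurableSet T) (n : ℕ) :
    MeasurableSet (Tword T n) := by
  have : Tword T n = (⋂ i : Fin (n+1), ⋂ _ : (i : ℕ) < n, (fun u : Fin (n+1) → Ω => u i) ⁻¹' Tᶜ)
      ∩ (fun u : Fin (n+1) → Ω => u (Fin.last n)) ⁻¹' T := by
    ext u; simp [Tword]
  rw [this]
  exact (MeasurableSet.iInter fun i => MeasurableSet.iInter fun _ =>
    (measurable_pi_apply i) hT.compl).inter ((measurable_pi_apply _) hT)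

lemma measurable_w {sc : Ω → ℝ≥0∞} (hsc : Measurable sc) : Measurable (w sc) :=
  Measurable.iInf fun t => Finset.measurable_prod _ fun i _ => hsc.comp (measurable_pi_apply _)

lemma measurable_lift {T : Set Ω} (hT : MeasurableSet T) {h : Ω → ℝ≥0∞} (hh : Measurable h) :
    Measurable (lift T h) :=
  Measurable.ennreal_tsum fun n =>
    (measurable_const.indicator ((measurable_take (n + 1)) (measurableSet_Tword hT n))).mul
      (hh.comp (measurable_pi_apply n))

lemma measurable_snoc (n : ℕ) :
    Measurable (fun p : (Fin (n + 1) → Ω) × Ω => (Fin.snoc p.1 p.2 : Fin (n+2) → Ω)) := by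
  apply measurable_pi_lambda
  intro i
  induction i using Fin.lastCases with
  | last => simpa using measurable_snd
  | cast j => simp only [Fin.snoc_castSucc]; exact (measurable_pi_apply j).comp measurable_fst

lemma isProb_μF (M : MarkovSetting Ω) (n : ℕ) : IsProbabilityMeasure (M.μF n) := by
  induction n with
  | zero =>
    rw [M.base]
    haveI := M.prob1
    exact Measure.isProbabilityMeasure_map (measurable_pi_lambda _ fun _ => measurable_id).aemeasurable
  | succ n ih =>
    rw [M.step n]
    haveI := ih; haveI := M.markov
    exact Measure.isProbabilityMeasure_map (measurable_snoc n).aemeasurable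

lemma pair_null (M : MarkovSetting Ω) {S : Set (Ω × Ω)} (hS : MeasurableSet S)
    (hdiag : ∀ x, M.κ x {y | (x, y) ∈ S} = 0) (n : ℕ) :
    M.μI {ω | (ω n, ω (n + 1)) ∈ S} = 0 := by
  haveI := isProb_μF M n; haveI := M.markov
  set E : Set (Fin (n + 2) → Ω) := {u | (u ⟨n, by omega⟩, u (Fin.last (n + 1))) ∈ S} with hE
  have hEm : MeasurableSet E :=
    (((measurable_pi_apply _).prodMk (measurable_pi_apply _)) hS)
  have h1 : {ω : ℕ → Ω | (ω n, ω (n + 1)) ∈ S} = take (n + 2) ⁻¹' E := rfl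
  have h2 : M.μI (take (n + 2) ⁻¹' E) = M.μF (n + 1) E := by
    rw [← M.proj (n + 1), Measure.map_apply (measurable_take _) hEm]
  rw [h1, h2, M.step n, Measure.map_apply (measurable_snoc n) hEm]
  have h3 : (fun p : (Fin (n + 1) → Ω) × Ω => (Fin.snoc p.1 p.2 : Fin (n+2) → Ω)) ⁻¹' E
      = {p : (Fin (n + 1) → Ω) × Ω | (p.1 (Fin.last n), p.2) ∈ S} := by
    ext p
    have e1 : (Fin.snoc p.1 p.2 : Fin (n+2) → Ω) ⟨n, by omega⟩ = p.1 (Fin.last n) := by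
      have : (⟨n, by omega⟩ : Fin (n+2)) = Fin.castSucc (Fin.last n) := rfl
      rw [this, Fin.snoc_castSucc]
    have e2 : (Fin.snoc p.1 p.2 : Fin (n+2) → Ω) (Fin.last (n+1)) = p.2 := Fin.snoc_last _ _
    simp [hE, e1, e2]
  rw [h3, Measure.compProd_apply]
  · simp [Kernel.comap_apply, hdiag]
  · exact (((measurable_pi_apply _).comp measurable_fst).prodMk measurable_snd) hS


section Pathwise

variable {T : Set Ω} {h : Ω → ℝ≥0∞} {sc : Ω → ℝ≥0∞}

/-- The good event: from any point in `T` the path stays at a point with the same `h`-value. -/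
def G (T : Set Ω) (h : Ω → ℝ≥0∞) : Set (ℕ → Ω) :=
  {ω | ∀ n, ω n ∈ T → ω (n + 1) ∈ T ∧ h (ω (n + 1)) = h (ω n)}

lemma G_absorb {ω : ℕ → Ω} (hω : ω ∈ G T h) {n : ℕ} (hn : ω n ∈ T) :
    ∀ m, n ≤ m → ω m ∈ T ∧ h (ω m) = h (ω n) := by
  intro m hm
  induction m with
  | zero => have : n = 0 := Nat.le_zero.mp hm; subst this; exact ⟨hn, rfl⟩
  | succ m ih =>
    rcases Nat.lt_or_ge n (m + 1) with hlt | hge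
    · obtain ⟨h1, h2⟩ := ih (by omega)
      obtain ⟨h3, h4⟩ := hω m h1
      exact ⟨h3, by rw [h4, h2]⟩
    · have : n = m + 1 := by omega
      subst this; exact ⟨hn, rfl⟩

lemma Tword_unique {ω : ℕ → Ω} {m n : ℕ} (hm : take (m + 1) ω ∈ Tword T m)
    (hn : take (n + 1) ω ∈ Tword T n) : m = n := by
  by_contra hne
  rcases Nat.lt_or_ge m n with hlt | hge
  · have h1 : ω m ∈ T := hm.2
    have h2 : ω m ∉ T := hn.1 ⟨m, by omega⟩ hlt
    exact h2 h1
  · have hlt : n < m := by omega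
    have h1 : ω n ∈ T := hn.2
    have h2 : ω n ∉ T := hm.1 ⟨n, by omega⟩ hlt
    exact h2 h1

lemma lift_eq_of_mem {ω : ℕ → Ω} {n : ℕ} (hn : take (n + 1) ω ∈ Tword T n) :
    lift T h ω = h (ω n) := by
  unfold lift
  rw [tsum_eq_single n]
  · have e : (cyl (Tword T n)).indicator (1 : (ℕ → Ω) → ℝ≥0∞) ω = 1 :=
      Set.indicator_of_mem hn 1
    rw [e, one_mul]
  · intro m hm
    by_cases hmem : take (m + 1) ω ∈ Tword T m
    · exact absurd (Tword_unique hmem hn) hm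
    · have e : (cyl (Tword T m)).indicator (1 : (ℕ → Ω) → ℝ≥0∞) ω = 0 :=
        Set.indicator_of_notMem hmem 1
      rw [e, zero_mul]

lemma lift_eq_zero' {ω : ℕ → Ω} (h0 : ∀ n, take (n + 1) ω ∉ Tword T n) :
    lift T h ω = 0 := by
  unfold lift
  have : ∀ n : ℕ, (cyl (Tword T n)).indicator 1 ω * h (ω n) = 0 := fun n => by
    have e : (cyl (Tword T n)).indicator (1 : (ℕ → Ω) → ℝ≥0∞) ω = 0 :=
      Set.indicator_of_notMem (h0 n) 1
    rw [e, zero_mul]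
  simp [this]

lemma lift_le_M {Mb : ℝ≥0∞} (hMb : ∀ x, h x ≤ Mb) (ω : ℕ → Ω) : lift T h ω ≤ Mb := by
  by_cases hex : ∃ n, take (n + 1) ω ∈ Tword T n
  · obtain ⟨n, hn⟩ := hex; rw [lift_eq_of_mem hn]; exact hMb _
  · push_neg at hex; rw [lift_eq_zero' hex]; exact zero_le

lemma first_entrance {ω : ℕ → Ω} {t : ℕ} (hA : take (t + 1) ω ∈ Tle T t) :
    ∃ n ≤ t, take (n + 1) ω ∈ Tword T n := by
  classical
  obtain ⟨i, hi⟩ := hA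
  have hex : ∃ m, ω m ∈ T := ⟨i, hi⟩
  refine ⟨Nat.find hex, ?_, fun j hj => Nat.find_min hex hj, Nat.find_spec hex⟩
  have h1 : Nat.find hex ≤ (i : ℕ) := Nat.find_min' hex hi
  omega

lemma prodP_antitone {ω : ℕ → Ω} (hsc1 : ∀ x, sc x ≤ 1) :
    Antitone (fun s => ∏ i : Fin (s + 1), sc (ω i)) := by
  apply antitone_nat_of_succ_le
  intro s
  have : (∏ i : Fin (s + 1 + 1), sc (ω i)) = (∏ i : Fin (s + 1), sc (ω i)) * sc (ω (s + 1)) := by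
    rw [Fin.prod_univ_castSucc]; simp
  rw [this]
  exact mul_le_of_le_one_right (zero_le) (hsc1 _)

lemma w_le_wt {ω : ℕ → Ω} (t : ℕ) : w sc ω ≤ wt sc t (take (t + 1) ω) := iInf_le _ t

lemma w_eq_of_G (hsc1 : ∀ x, sc x ≤ 1) (hscT : ∀ x ∈ T, sc x = 1) {ω : ℕ → Ω} {t : ℕ}
    (hω : ω ∈ G T h) (hA : take (t + 1) ω ∈ Tle T t) :
    w sc ω = wt sc t (take (t + 1) ω) := by
  obtain ⟨n, hnt, hword⟩ := first_entrance hA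
  have habs : ∀ m, n ≤ m → ω m ∈ T := fun m hm => (G_absorb hω hword.2 m hm).1
  have hconst : ∀ s, t ≤ s → (∏ i : Fin (s + 1), sc (ω i)) = ∏ i : Fin (t + 1), sc (ω i) := by
    intro s
    induction s with
    | zero => intro hs; obtain rfl : t = 0 := Nat.le_zero.mp hs; rfl
    | succ s ih =>
      intro hs
      rcases Nat.lt_or_ge s t with hlt | hge
      · obtain rfl : t = s + 1 := by omega
        rfl
      · have e1 : (∏ i : Fin (s + 1 + 1), sc (ω i))
            = (∏ i : Fin (s + 1), sc (ω i)) * sc (ω (s + 1)) := by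
          rw [Fin.prod_univ_castSucc]; simp
        have e2 : sc (ω (s + 1)) = 1 := hscT _ (habs (s + 1) (by omega))
        rw [e1, e2, mul_one, ih hge]
  apply le_antisymm
  · exact iInf_le _ t
  · apply le_iInf
    intro s
    rcases le_or_gt t s with hs | hs
    · rw [hconst s hs]; exact le_refl _
    · exact prodP_antitone hsc1 (by omega : s ≤ t)

lemma lift_eq_of_G {ω : ℕ → Ω} {t : ℕ} (hω : ω ∈ G T h) (hA : take (t + 1) ω ∈ Tle T t) :
    lift T h ω = h (ω t) := by
  obtain ⟨n, hnt, hword⟩ := first_entrance hA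
  rw [lift_eq_of_mem hword, (G_absorb hω hword.2 t hnt).2]
  rfl

lemma last_mem_of_G {ω : ℕ → Ω} {t : ℕ} (hω : ω ∈ G T h) (hA : take (t + 1) ω ∈ Tle T t) :
    ω t ∈ T := by
  obtain ⟨n, hnt, hword⟩ := first_entrance hA
  exact (G_absorb hω hword.2 t hnt).1

lemma G_ae (M : MarkovSetting Ω) (hT : MeasurableSet T) (hh : Measurable h)
    (hκT : ∀ ω ∈ T, M.κ ω = Measure.dirac ω) : M.μI (G T h)ᶜ = 0 := by
  set Sc : Set (Ω × Ω) := {p | p.1 ∈ T ∧ (p.2 ∉ T ∨ h p.2 ≠ h p.1)} with hSc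
  have hScm : MeasurableSet Sc := by
    apply (hT.preimage measurable_fst).inter
    exact ((hT.preimage measurable_snd).compl.union
      (measurableSet_eq_fun (hh.comp measurable_snd) (hh.comp measurable_fst)).compl)
  have hsub : (G T h)ᶜ ⊆ ⋃ n, {ω : ℕ → Ω | (ω n, ω (n + 1)) ∈ Sc} := by
    intro ω hω
    simp only [G, mem_compl_iff, mem_setOf_eq, not_forall] at hω
    obtain ⟨n, hn⟩ := hω
    refine mem_iUnion.mpr ⟨n, ?_⟩
    simp only [hSc, mem_setOf_eq]
    push_neg at hn
    tauto
  refine measure_mono_null hsub (measure_iUnion_null fun n => pair_null M hScm ?_ n)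
  intro x
  by_cases hx : x ∈ T
  · have hms : MeasurableSet {y | (x, y) ∈ Sc} := hScm.preimage measurable_prodMk_left
    rw [hκT x hx, Measure.dirac_apply' _ hms]
    have : x ∉ {y | (x, y) ∈ Sc} := by simp [hSc]
    rw [Set.indicator_of_notMem this]
  · have : {y | (x, y) ∈ Sc} = ∅ := by
      ext y; simp [hSc, hx]
    rw [this]; exact measure_empty

end Pathwise

-- transfer from μI to μF t
lemma lintegral_take (M : MarkovSetting Ω) {t : ℕ} {g : (Fin (t + 1) → Ω) → ℝ≥0∞}
    (hg : Measurable g) :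
    ∫⁻ u, g u ∂(M.μF t) = ∫⁻ ω, g (take (t + 1) ω) ∂M.μI := by
  rw [← M.proj t, lintegral_map hg (measurable_take _)]


/-- **Filtering distributions and lifted functions.** -/
theorem filtering_bounds
    (M : MarkovSetting Ω) (T : Set Ω) (hT : MeasurableSet T)
    (hκT : ∀ ω ∈ T, M.κ ω = Measure.dirac ω)
    (sc : Ω → ℝ≥0∞) (hsc : Measurable sc) (hsc1 : ∀ x, sc x ≤ 1)
    (hscT : ∀ ω ∈ T, sc ω = 1) (t : ℕ)
    (Hpos : 0 < ∫⁻ u, (Tle T t).indicator 1 u * wt sc t u ∂(M.μF t))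
    (h : Ω → ℝ≥0∞) (hh : Measurable h) (hsupp : Function.support h ⊆ T)
    (Mb : ℝ≥0∞) (hMb : ∀ x, h x ≤ Mb) :
    (∫⁻ u, wt sc t u ∂(M.μF t)) / (∫⁻ u, (Tle T t).indicator 1 u * wt sc t u ∂(M.μF t)) =
        (filt sc t (M.μF t) T)⁻¹ ∧
    (∫⁻ u, wt sc t u ∂(M.μF t)) / (∫⁻ u, (Tle T t).indicator 1 u * wt sc t u ∂(M.μF t)) =
        (∫⁻ x, T.indicator 1 x ∂(filt sc t (M.μF t)))⁻¹ ∧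
    ∫⁻ x, h x ∂(filt sc t (M.μF t)) ≤
      (∫⁻ ω, lift T h ω * w sc ω ∂M.μI) / (∫⁻ ω, w sc ω ∂M.μI) ∧
    (∫⁻ ω, lift T h ω * w sc ω ∂M.μI) / (∫⁻ ω, w sc ω ∂M.μI) ≤
      (∫⁻ x, h x ∂(filt sc t (M.μF t))) *
        ((∫⁻ u, wt sc t u ∂(M.μF t)) /
          (∫⁻ u, (Tle T t).indicator 1 u * wt sc t u ∂(M.μF t))) +
      Mb * ((∫⁻ u, wt sc t u ∂(M.μF t)) /
          (∫⁻ u, (Tle T t).indicator 1 u * wt sc t u ∂(M.μF t)) - 1) := by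
  classical
  haveI := M.probI
  haveI := isProb_μF M t
  have hwtm : Measurable (wt sc t) := measurable_wt hsc t
  have hTlem : MeasurableSet (Tle T t) := measurableSet_Tle hT t
  have hlastm : Measurable (fun u : Fin (t + 1) → Ω => u (Fin.last t)) := measurable_pi_apply _
  have hindm : Measurable ((Tle T t).indicator (1 : (Fin (t + 1) → Ω) → ℝ≥0∞)) :=
    measurable_const.indicator hTlem
  have hgZT : Measurable (fun u => (Tle T t).indicator 1 u * wt sc t u) := hindm.mul hwtm
  set Z := ∫⁻ u, wt sc t u ∂(M.μF t) with hZdef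
  set ZT := ∫⁻ u, (Tle T t).indicator 1 u * wt sc t u ∂(M.μF t) with hZTdef
  have hwt_le_one : ∀ u, wt sc t u ≤ 1 := fun u =>
    Finset.prod_le_one (fun i _ => zero_le) (fun i _ => hsc1 _)
  have hZ_le_one : Z ≤ 1 := by
    rw [hZdef]
    calc ∫⁻ u, wt sc t u ∂(M.μF t) ≤ ∫⁻ _, 1 ∂(M.μF t) := lintegral_mono fun u => hwt_le_one u
    _ = 1 := by simp
  have hZT_le_Z : ZT ≤ Z := by
    rw [hZdef, hZTdef]
    refine lintegral_mono fun u => ?_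
    by_cases hu : u ∈ Tle T t
    · rw [Set.indicator_of_mem hu, Pi.one_apply, one_mul]
    · rw [Set.indicator_of_notMem hu, zero_mul]; exact zero_le
  have hZT_ne_zero : ZT ≠ 0 := Hpos.ne'
  have hZ_ne_zero : Z ≠ 0 := fun hc => hZT_ne_zero (le_antisymm (hc ▸ hZT_le_Z) (zero_le))
  have hZ_ne_top : Z ≠ ∞ := (lt_of_le_of_lt hZ_le_one (by norm_num)).ne
  have hZT_ne_top : ZT ≠ ∞ := (lt_of_le_of_lt (hZT_le_Z.trans hZ_le_one) (by norm_num)).ne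
  have hG : ∀ᵐ ω ∂M.μI, ω ∈ G T h := by
    rw [ae_iff]
    exact G_ae M hT hh hκT
  have hZI : Z = ∫⁻ ω, wt sc t (take (t + 1) ω) ∂M.μI := lintegral_take M hwtm
  have hZTI : ZT = ∫⁻ ω, (Tle T t).indicator 1 (take (t + 1) ω) * wt sc t (take (t + 1) ω)
      ∂M.μI := lintegral_take M hgZT
  set W := ∫⁻ ω, w sc ω ∂M.μI with hWdef
  have hW_le_Z : W ≤ Z := by
    rw [hZI, hWdef]; exact lintegral_mono fun ω => w_le_wt t
  have hZT_le_W : ZT ≤ W := by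
    rw [hZTI, hWdef]
    refine lintegral_mono_ae ?_
    filter_upwards [hG] with ω hω
    by_cases hA : take (t + 1) ω ∈ Tle T t
    · rw [Set.indicator_of_mem hA, Pi.one_apply, one_mul, ← w_eq_of_G hsc1 hscT hω hA]
    · rw [Set.indicator_of_notMem hA, zero_mul]; exact zero_le
  set N := ∫⁻ u, (Tle T t).indicator 1 u * (h (u (Fin.last t)) * wt sc t u) ∂(M.μF t) with hNdef
  have hgN : Measurable (fun u : Fin (t + 1) → Ω =>
      (Tle T t).indicator 1 u * (h (u (Fin.last t)) * wt sc t u)) :=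
    hindm.mul ((hh.comp hlastm).mul hwtm)
  have hNI : N = ∫⁻ ω, (Tle T t).indicator 1 (take (t + 1) ω) *
      (h (take (t + 1) ω (Fin.last t)) * wt sc t (take (t + 1) ω)) ∂M.μI :=
    lintegral_take M hgN
  set LW := ∫⁻ ω, lift T h ω * w sc ω ∂M.μI with hLWdef
  have hN_le_LW : N ≤ LW := by
    rw [hNI, hLWdef]
    refine lintegral_mono_ae ?_
    filter_upwards [hG] with ω hω
    by_cases hA : take (t + 1) ω ∈ Tle T t
    · show (Tle T t).indicator 1 (take (t + 1) ω) *
        (h (ω t) * wt sc t (take (t + 1) ω)) ≤ lift T h ω * w sc ω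
      rw [Set.indicator_of_mem hA, Pi.one_apply, one_mul,
        ← lift_eq_of_G hω hA, ← w_eq_of_G hsc1 hscT hω hA]
    · rw [Set.indicator_of_notMem hA, zero_mul]; exact zero_le
  have hgc : Measurable (fun u : Fin (t + 1) → Ω => ((Tle T t)ᶜ).indicator 1 u * wt sc t u) :=
    (measurable_const.indicator hTlem.compl).mul hwtm
  have hAc_int : ∫⁻ ω, ((Tle T t)ᶜ).indicator 1 (take (t + 1) ω) * wt sc t (take (t + 1) ω)
      ∂M.μI = Z - ZT := by
    rw [← lintegral_take M hgc]
    refine ENNReal.eq_sub_of_add_eq hZT_ne_top ?_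
    rw [hZTdef, hZdef, ← lintegral_add_left hgc]
    refine lintegral_congr fun u => ?_
    by_cases hu : u ∈ Tle T t
    · rw [Set.indicator_of_mem hu, Set.indicator_of_notMem (by simpa using hu), Pi.one_apply,
        zero_mul, one_mul, zero_add]
    · rw [Set.indicator_of_notMem hu, Set.indicator_of_mem (by simpa using hu), Pi.one_apply,
        zero_mul, one_mul, add_zero]
  have hLW_le : LW ≤ N + Mb * (Z - ZT) := by
    have step1 : LW ≤ ∫⁻ ω, ((Tle T t).indicator 1 (take (t + 1) ω) *
        (h (take (t + 1) ω (Fin.last t)) * wt sc t (take (t + 1) ω)) +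
        Mb * (((Tle T t)ᶜ).indicator 1 (take (t + 1) ω) * wt sc t (take (t + 1) ω))) ∂M.μI := by
      rw [hLWdef]
      refine lintegral_mono_ae ?_
      filter_upwards [hG] with ω hω
      by_cases hA : take (t + 1) ω ∈ Tle T t
      · have e1 : lift T h ω = h (ω t) := lift_eq_of_G hω hA
        have e2 : w sc ω = wt sc t (take (t + 1) ω) := w_eq_of_G hsc1 hscT hω hA
        have e3 : ((Tle T t)ᶜ).indicator (1 : (Fin (t + 1) → Ω) → ℝ≥0∞) (take (t + 1) ω) = 0 :=
          Set.indicator_of_notMem (by simpa using hA) 1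
        rw [e1, e2, e3, zero_mul, mul_zero, add_zero, Set.indicator_of_mem hA, Pi.one_apply,
          one_mul]
        exact le_refl _
      · have e3 : ((Tle T t)ᶜ).indicator (1 : (Fin (t + 1) → Ω) → ℝ≥0∞) (take (t + 1) ω) = 1 :=
          Set.indicator_of_mem (by simpa using hA) 1
        rw [Set.indicator_of_notMem hA, zero_mul, zero_add, e3, one_mul]
        calc lift T h ω * w sc ω ≤ Mb * wt sc t (take (t + 1) ω) :=
              mul_le_mul' (lift_le_M hMb ω) (w_le_wt t)
        _ = _ := rfl
    refine step1.trans (le_of_eq ?_)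
    have hm1 : Measurable fun ω : ℕ → Ω => (Tle T t).indicator 1 (take (t + 1) ω) *
        (h (take (t + 1) ω (Fin.last t)) * wt sc t (take (t + 1) ω)) :=
      hgN.comp (measurable_take (t + 1))
    have hm2 : Measurable fun ω : ℕ → Ω =>
        ((Tle T t)ᶜ).indicator 1 (take (t + 1) ω) * wt sc t (take (t + 1) ω) :=
      hgc.comp (measurable_take (t + 1))
    rw [lintegral_add_left hm1]
    congr 1
    · exact hNI.symm
    · rw [lintegral_const_mul Mb hm2, hAc_int]
  have hfilt_h : ∫⁻ x, h x ∂(filt sc t (M.μF t)) = N / Z := by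
    have hm : Measurable fun u : Fin (t + 1) → Ω => h (u (Fin.last t)) := hh.comp hlastm
    rw [filt, lintegral_smul_measure, lintegral_map hh hlastm,
      lintegral_withDensity_eq_lintegral_mul _ hwtm hm]
    have e : ∫⁻ u, (wt sc t * fun u : Fin (t + 1) → Ω => h (u (Fin.last t))) u ∂(M.μF t) = N := by
      rw [hNdef]
      refine lintegral_congr fun u => ?_
      simp only [Pi.mul_apply]
      by_cases hu : h (u (Fin.last t)) = 0
      · simp [hu]
      · have hmem : u ∈ Tle T t := ⟨Fin.last t, hsupp (Function.mem_support.mpr hu)⟩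
        rw [Set.indicator_of_mem hmem, Pi.one_apply, one_mul, mul_comm]
    rw [e, ← hZdef, ENNReal.div_eq_inv_mul, smul_eq_mul]
  have hfilt_T : filt sc t (M.μF t) T = ZT / Z := by
    rw [filt]
    rw [Measure.smul_apply, smul_eq_mul, Measure.map_apply hlastm hT,
      withDensity_apply _ (hlastm hT), ← lintegral_indicator (hlastm hT)]
    have e : ∫⁻ u, ((fun u : Fin (t + 1) → Ω => u (Fin.last t)) ⁻¹' T).indicator (wt sc t) u
        ∂(M.μF t) = ZT := by
      rw [hZTdef, lintegral_take M (hwtm.indicator (hlastm hT)), lintegral_take M hgZT]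
      refine lintegral_congr_ae ?_
      filter_upwards [hG] with ω hω
      by_cases hA : take (t + 1) ω ∈ Tle T t
      · have hlast : take (t + 1) ω ∈ (fun u : Fin (t + 1) → Ω => u (Fin.last t)) ⁻¹' T :=
          last_mem_of_G hω hA
        rw [Set.indicator_of_mem hlast, Set.indicator_of_mem hA, Pi.one_apply, one_mul]
      · have hlast : take (t + 1) ω ∉ (fun u : Fin (t + 1) → Ω => u (Fin.last t)) ⁻¹' T :=
          fun hc => hA ⟨Fin.last t, hc⟩
        rw [Set.indicator_of_notMem hlast, Set.indicator_of_notMem hA, zero_mul]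
    rw [e, ← hZdef, ENNReal.div_eq_inv_mul]
  have goal1 : Z / ZT = (filt sc t (M.μF t) T)⁻¹ := by
    rw [hfilt_T, ENNReal.inv_div (Or.inl hZ_ne_top) (Or.inl hZ_ne_zero)]
  refine ⟨goal1, ?_, ?_, ?_⟩
  · rw [lintegral_indicator_one hT]; exact goal1
  · calc ∫⁻ x, h x ∂(filt sc t (M.μF t)) = N / Z := hfilt_h
    _ ≤ LW / W := ENNReal.div_le_div hN_le_LW hW_le_Z
  · rw [hfilt_h]
    calc LW / W ≤ (N + Mb * (Z - ZT)) / ZT := ENNReal.div_le_div hLW_le hZT_le_W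
    _ = N / ZT + Mb * (Z - ZT) / ZT := ENNReal.div_add_div_same.symm
    _ = N / Z * (Z / ZT) + Mb * (Z / ZT - 1) := by
      congr 1
      · have e : N / Z * (Z / ZT) = N / ZT := by
          rw [div_eq_mul_inv, div_eq_mul_inv, div_eq_mul_inv, ← mul_assoc, mul_assoc N,
            ENNReal.inv_mul_cancel hZ_ne_zero hZ_ne_top, mul_one]
        rw [e]
      · rw [mul_div_assoc]
        congr 1
        rw [ENNReal.sub_div (fun _ _ => hZT_ne_zero), ENNReal.div_self hZT_ne_zero hZT_ne_top]


end PaperPPG
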